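/- arXiv:0904.4623 — 2 statements merged into one kernel-verified Lean document; each statement's English description precedes it below -/
import Mathlib

section
/- If s > 1/2, then for all u₀ ∈ H^s_per([-π,π]) there exist T = T(‖u₀‖_{H^s_per}) > 0 and a unique solution u ∈ C([-T,T]; H^s_per) of the periodic initial value problem u_t + u_x + u u_x + H u_{xt} = 0, u(·,0) = u₀, where H denotes the periodic Hilbert transform. -/
/-!
Local well-posedness for the periodic regularized Benjamin–Ono equation
  u_t + u_x + u u_x + H u_{xt} = 0,  u(·,0) = u₀,
for u₀ ∈ H^s_per([-π,π]), s > 1/2.  We work on the Fourier side: a 2π-periodic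
function is represented by its sequence of Fourier coefficients `a : ℤ → ℂ`,
the H^s norm is ‖a‖²_{H^s} = 2π Σ (1+k²)^s |a k|², and the equation is
equivalent to the integral equation u(t) = u₀ + ∫₀ᵗ K(u + u²/2) dτ with
(Ku)^(n) = (-in/(1+|n|)) û(n) and products becoming discrete convolutions.
-/

open MeasureTheory

/-- Membership in `H^s_per` (finite Sobolev norm) on the Fourier side. -/
def inHs (s : ℝ) (a : ℤ → ℂ) : Prop :=
  Summable fun k : ℤ => (1 + (k : ℝ) ^ 2) ^ s * ‖a k‖ ^ 2

/-- The periodic Sobolev norm `‖a‖_{H^s_per}`. -/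
noncomputable def hNorm (s : ℝ) (a : ℤ → ℂ) : ℝ :=
  Real.sqrt (2 * Real.pi * ∑' k : ℤ, (1 + (k : ℝ) ^ 2) ^ s * ‖a k‖ ^ 2)

/-- Fourier multiplier of `K = -∂ₓ (1 + H∂ₓ)⁻¹`. -/
noncomputable def Kmul (n : ℤ) : ℂ := (-Complex.I * n) / (1 + |n|)

/-- Discrete convolution: the Fourier coefficients of a product. -/
noncomputable def fconv (a b : ℤ → ℂ) (n : ℤ) : ℂ := ∑' m : ℤ, a m * b (n - m)

/-- `u : ℝ → (ℤ → ℂ)` is a solution of the rBO integral equation on `[-T, T]`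
belonging to `C([-T,T]; H^s_per)`, with initial datum `u₀`. -/
def IsSol (s T : ℝ) (u₀ : ℤ → ℂ) (u : ℝ → ℤ → ℂ) : Prop :=
  (∀ t ∈ Set.Icc (-T) T, inHs s (u t)) ∧
  (∀ t₀ ∈ Set.Icc (-T) T,
     Filter.Tendsto (fun t => hNorm s (fun k => u t k - u t₀ k))
       (nhdsWithin t₀ (Set.Icc (-T) T)) (nhds 0)) ∧
  (∀ t ∈ Set.Icc (-T) T, ∀ n : ℤ,
     u t n = u₀ n + ∫ τ in (0:ℝ)..t,
       Kmul n * (u τ n + (1 / 2) * fconv (u τ) (u τ) n))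
/-!
Multiplying the `n`-th Fourier coefficient by `√(2π) (1 + n²)^(s/2)` identifies `H^s_per`
isometrically with `ℓ²(ℤ)`. The weight satisfies `w n ≤ 2^s (w m + w (n - m))`, and
`∑ w n⁻² < ∞` exactly when `s > 1/2`; distributing the weight onto one factor of a convolution
and applying Young's inequality `‖x * y‖₂ ≤ ‖x‖₂ ‖y‖₁` together with Cauchy–Schwarz
`‖y‖₁ ≤ (∑ w⁻²)^(1/2) ‖w y‖₂` shows that convolution is a bounded bilinear map on `H^s_per`.
Since `|Kmul n| ≤ 1`, the equation becomes the ODE `x' = K (x + x²/2)` in `ℓ²` with a quadratic,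
hence smooth, vector field. A smooth vector field has local integral curves and is Lipschitz on
the compact set swept out by two solutions, which gives existence and uniqueness; the integral
equation is equivalent to the ODE by the fundamental theorem of calculus.
-/

open Set Filter
open scoped ENNReal NNReal Topology lp

section IntegralSolution

variable {E : Type*} [NormedAddCommGroup E] [NormedSpace ℝ E] [CompleteSpace E]

def IsIntegralSolution (F : E → E) (T : ℝ) (x₀ : E) (α : ℝ → E) : Prop :=
  ContinuousOn α (Icc (-T) T) ∧ ∀ t ∈ Icc (-T) T, α t = x₀ + ∫ τ in (0:ℝ)..t, F (α τ)

variable {F : E → E} {T : ℝ} {x₀ : E} {α β : ℝ → E}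

theorem IsIntegralSolution.hasDerivAt (hF : Continuous F) (hα : IsIntegralSolution F T x₀ α)
    {t : ℝ} (ht : t ∈ Ioo (-T) T) : HasDerivAt α (F (α t)) t := by
  have hFα : ContinuousOn (fun τ => F (α τ)) (Icc (-T) T) := hF.comp_continuousOn hα.1
  have h0 : (0:ℝ) ∈ Icc (-T) T := ⟨by linarith [ht.1, ht.2], by linarith [ht.1, ht.2]⟩
  have hint : HasDerivAt (fun t => x₀ + ∫ τ in (0:ℝ)..t, F (α τ)) (F (α t)) t :=
    (intervalIntegral.integral_hasDerivAt_right
      ((hFα.mono (uIcc_subset_Icc h0 (Ioo_subset_Icc_self ht))).intervalIntegrable)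
      (hFα.mono Ioo_subset_Icc_self |>.stronglyMeasurableAtFilter isOpen_Ioo t ht)
      (hFα.continuousAt (Icc_mem_nhds ht.1 ht.2))).const_add x₀
  exact hint.congr_of_eventuallyEq <| eventually_of_mem (Icc_mem_nhds ht.1 ht.2) hα.2

theorem IsIntegralSolution.eqOn (hF : ContDiff ℝ 1 F) (hT : 0 < T)
    (hα : IsIntegralSolution F T x₀ α) (hβ : IsIntegralSolution F T x₀ β) :
    EqOn α β (Icc (-T) T) := by
  have h0 : (0:ℝ) ∈ Icc (-T) T := ⟨by linarith, hT.le⟩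
  set K := α '' Icc (-T) T ∪ β '' Icc (-T) T
  have hK : IsCompact K := (isCompact_Icc.image_of_continuousOn hα.1).union
    (isCompact_Icc.image_of_continuousOn hβ.1)
  obtain ⟨L, hL⟩ := hF.locallyLipschitz.locallyLipschitzOn.exists_lipschitzOnWith_of_compact hK
  exact ODE_solution_unique_of_mem_Icc (v := fun _ => F) (s := fun _ => K) (fun _ _ => hL)
    ⟨neg_lt_zero.2 hT, hT⟩ hα.1 (fun t ht => hα.hasDerivAt hF.continuous ht)
    (fun t ht => Or.inl (mem_image_of_mem _ (Ioo_subset_Icc_self ht))) hβ.1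
    (fun t ht => hβ.hasDerivAt hF.continuous ht)
    (fun t ht => Or.inr (mem_image_of_mem _ (Ioo_subset_Icc_self ht)))
    (by rw [hα.2 0 h0, hβ.2 0 h0, intervalIntegral.integral_same, intervalIntegral.integral_same])

theorem exists_isIntegralSolution (hF : ContDiff ℝ 1 F) (x₀ : E) :
    ∃ T > 0, ∃ α, IsIntegralSolution F T x₀ α := by
  obtain ⟨α, hα₀, ε, hε, hα⟩ :=
    hF.contDiffAt.exists_forall_mem_closedBall_exists_eq_forall_mem_Ioo_hasDerivAt₀ (x₀ := x₀) 0
  have hsub : Icc (-(ε / 2)) (ε / 2) ⊆ Ioo (0 - ε) (0 + ε) :=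
    Icc_subset_Ioo (by linarith) (by linarith)
  have hcont : ContinuousOn α (Icc (-(ε / 2)) (ε / 2)) :=
    fun t ht => (hα t (hsub ht)).continuousAt.continuousWithinAt
  refine ⟨ε / 2, half_pos hε, α, hcont, fun t ht => ?_⟩
  have h0 : (0:ℝ) ∈ Icc (-(ε / 2)) (ε / 2) := ⟨by linarith, by linarith⟩
  have hI := uIcc_subset_Icc h0 ht
  rw [intervalIntegral.integral_eq_sub_of_hasDerivAt (fun τ hτ => hα τ (hsub (hI hτ)))
    ((hF.continuous.comp_continuousOn (hcont.mono hI)).intervalIntegrable), hα₀]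
  abel

end IntegralSolution

namespace ENNReal

variable {ι G : Type*}

theorem tsum_mul_sq_le (g f : ι → ℝ≥0) :
    (∑' i, (g i : ℝ≥0∞) * f i) ^ 2 ≤ (∑' i, (g i : ℝ≥0∞)) * ∑' i, (g i : ℝ≥0∞) * f i ^ 2 := by
  refine le_of_tendsto' ((ENNReal.continuous_pow 2).tendsto _ |>.comp ENNReal.summable.hasSum)
    fun s => ?_
  have hCS : (∑ i ∈ s, g i * f i) ^ 2 ≤ (∑ i ∈ s, g i) * ∑ i ∈ s, g i * f i ^ 2 :=
    Finset.sum_sq_le_sum_mul_sum_of_sq_le_mul s (fun _ _ => bot_le) (fun _ _ => bot_le)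
      fun i _ => by rw [mul_pow, sq (g i), mul_assoc]
  calc (∑ i ∈ s, (g i : ℝ≥0∞) * f i) ^ 2
      = (((∑ i ∈ s, g i * f i) ^ 2 : ℝ≥0) : ℝ≥0∞) := by push_cast; rfl
    _ ≤ (((∑ i ∈ s, g i) * ∑ i ∈ s, g i * f i ^ 2 : ℝ≥0) : ℝ≥0∞) := coe_le_coe.2 hCS
    _ = (∑ i ∈ s, (g i : ℝ≥0∞)) * ∑ i ∈ s, (g i : ℝ≥0∞) * f i ^ 2 := by push_cast; rfl
    _ ≤ _ := mul_le_mul' (ENNReal.sum_le_tsum s) (ENNReal.sum_le_tsum s)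

theorem tsum_sq_le_tsum_inv_sq_mul (W y : ι → ℝ≥0) (hW : ∀ i, W i ≠ 0) :
    (∑' i, (y i : ℝ≥0∞)) ^ 2
      ≤ (∑' i, ((W i ^ 2)⁻¹ : ℝ≥0) : ℝ≥0∞) * ∑' i, ((W i : ℝ≥0∞) * y i) ^ 2 := by
  have h := tsum_mul_sq_le (fun i => (W i ^ 2)⁻¹) (fun i => W i ^ 2 * y i)
  have e₁ : ∀ i, (((W i ^ 2)⁻¹ : ℝ≥0) : ℝ≥0∞) * ((W i ^ 2 * y i : ℝ≥0) : ℝ≥0∞) = y i := by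
    intro i
    rw [← coe_mul, inv_mul_cancel_left₀ (pow_ne_zero 2 (hW i))]
  have e₂ : ∀ i, (((W i ^ 2)⁻¹ : ℝ≥0) : ℝ≥0∞) * ((W i ^ 2 * y i : ℝ≥0) : ℝ≥0∞) ^ 2
      = ((W i : ℝ≥0∞) * y i) ^ 2 := by
    intro i
    have hW2 : W i ^ 2 ≠ 0 := pow_ne_zero 2 (hW i)
    rw [← coe_pow, ← coe_mul, ← coe_mul, ← coe_pow]
    congr 1
    field_simp
  simpa only [e₁, e₂] using h

theorem add_sq_le (a b : ℝ≥0∞) : (a + b) ^ 2 ≤ 2 * (a ^ 2 + b ^ 2) := by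
  rcases eq_or_ne a ⊤ with rfl | ha
  · simp
  rcases eq_or_ne b ⊤ with rfl | hb
  · simp
  lift a to ℝ≥0 using ha
  lift b to ℝ≥0 using hb
  exact_mod_cast _root_.add_sq_le (a := a) (b := b)

variable [AddCommGroup G]

theorem tsum_conv_comm (x y : G → ℝ≥0∞) (n : G) :
    ∑' m, x m * y (n - m) = ∑' m, y m * x (n - m) := by
  rw [← (Equiv.subLeft n).tsum_eq fun m => y m * x (n - m)]
  exact tsum_congr fun m => by rw [Equiv.subLeft_apply, _root_.sub_sub_cancel, mul_comm]

theorem tsum_conv_sq_le (x y : G → ℝ≥0) :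
    ∑' n, (∑' m, (x m : ℝ≥0∞) * y (n - m)) ^ 2
      ≤ (∑' n, (y n : ℝ≥0∞)) ^ 2 * ∑' n, (x n : ℝ≥0∞) ^ 2 := by
  set Y := ∑' n, (y n : ℝ≥0∞)
  have hYl : ∀ n, ∑' m, (y (n - m) : ℝ≥0∞) = Y :=
    fun n => (Equiv.subLeft n).tsum_eq fun k => (y k : ℝ≥0∞)
  have hYr : ∀ m, ∑' n, (y (n - m) : ℝ≥0∞) = Y :=
    fun m => (Equiv.subRight m).tsum_eq fun k => (y k : ℝ≥0∞)
  calc ∑' n, (∑' m, (x m : ℝ≥0∞) * y (n - m)) ^ 2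
      ≤ ∑' n, Y * ∑' m, (y (n - m) : ℝ≥0∞) * x m ^ 2 := by
        refine ENNReal.tsum_le_tsum fun n => ?_
        have h := tsum_mul_sq_le (fun m => y (n - m)) x
        rw [hYl n] at h
        simpa only [mul_comm (x _ : ℝ≥0∞)] using h
    _ = Y * ∑' m, (∑' n, (y (n - m) : ℝ≥0∞)) * x m ^ 2 := by
        rw [ENNReal.tsum_mul_left, ENNReal.tsum_comm]
        simp only [ENNReal.tsum_mul_right]
    _ = Y ^ 2 * ∑' n, (x n : ℝ≥0∞) ^ 2 := by
        simp only [hYr, ENNReal.tsum_mul_left]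
        ring

theorem tsum_weight_mul_conv_sq_le {W : G → ℝ≥0} {c : ℝ≥0}
    (hW : ∀ n m, W n ≤ c * (W m + W (n - m))) (x y : G → ℝ≥0) :
    ∑' n, ((W n : ℝ≥0∞) * ∑' m, (x m : ℝ≥0∞) * y (n - m)) ^ 2
      ≤ 2 * (c : ℝ≥0∞) ^ 2 * ((∑' n, (y n : ℝ≥0∞)) ^ 2 * ∑' n, ((W n : ℝ≥0∞) * x n) ^ 2
        + (∑' n, (x n : ℝ≥0∞)) ^ 2 * ∑' n, ((W n : ℝ≥0∞) * y n) ^ 2) := by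
  set A := fun n => ∑' m, ((W m * x m : ℝ≥0) : ℝ≥0∞) * y (n - m)
  set B := fun n => ∑' m, ((W m * y m : ℝ≥0) : ℝ≥0∞) * x (n - m)
  have hpt : ∀ n, (W n : ℝ≥0∞) * ∑' m, (x m : ℝ≥0∞) * y (n - m) ≤ c * (A n + B n) := by
    intro n
    rw [show B n = ∑' m, (x m : ℝ≥0∞) * ((W (n - m) * y (n - m) : ℝ≥0) : ℝ≥0∞) from
      tsum_conv_comm (fun m => ((W m * y m : ℝ≥0) : ℝ≥0∞)) (fun m => x m) n,
      ← ENNReal.tsum_add, ← ENNReal.tsum_mul_left, ← ENNReal.tsum_mul_left]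
    refine ENNReal.tsum_le_tsum fun m => ?_
    calc (W n : ℝ≥0∞) * (x m * y (n - m))
        ≤ (c * (W m + W (n - m)) : ℝ≥0) * (x m * y (n - m)) := by
          gcongr; exact_mod_cast hW n m
      _ = _ := by push_cast; ring
  calc ∑' n, ((W n : ℝ≥0∞) * ∑' m, (x m : ℝ≥0∞) * y (n - m)) ^ 2
      ≤ ∑' n, 2 * (c : ℝ≥0∞) ^ 2 * (A n ^ 2 + B n ^ 2) := by
        refine ENNReal.tsum_le_tsum fun n => ?_
        calc _ ≤ ((c : ℝ≥0∞) * (A n + B n)) ^ 2 := by gcongr ?_ ^ 2; exact hpt n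
          _ ≤ (c : ℝ≥0∞) ^ 2 * (2 * (A n ^ 2 + B n ^ 2)) := by
            rw [mul_pow]; gcongr; exact add_sq_le (A n) (B n)
          _ = _ := by ring
    _ = 2 * (c : ℝ≥0∞) ^ 2 * (∑' n, A n ^ 2 + ∑' n, B n ^ 2) := by
        rw [ENNReal.tsum_mul_left, ENNReal.tsum_add]
    _ ≤ _ := by
        gcongr
        · simpa only [A, coe_mul] using tsum_conv_sq_le (fun m => W m * x m) y
        · simpa only [B, coe_mul] using tsum_conv_sq_le (fun m => W m * y m) x

end ENNReal

section L2

variable {ι E : Type*} [NormedAddCommGroup E]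

lemma memℓp_two_iff_summable {f : ι → E} : Memℓp f 2 ↔ Summable fun i => ‖f i‖ ^ 2 := by
  simp [memℓp_gen_iff]

lemma memℓp_two_of_tsum_ne_top {f : ι → E} (hf : ∑' i, (‖f i‖₊ : ℝ≥0∞) ^ 2 ≠ ⊤) :
    Memℓp f 2 := by
  simp_rw [← ENNReal.coe_pow, ENNReal.tsum_coe_ne_top_iff_summable, ← NNReal.summable_coe] at hf
  exact memℓp_two_iff_summable.2 (by simpa using hf)

lemma norm_sq_eq_tsum (x : ℓ²(ι, E)) : ‖x‖ ^ 2 = ∑' i, ‖x i‖ ^ 2 := by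
  simpa using lp.norm_rpow_eq_tsum (p := 2) (by simp) x

lemma coe_nnnorm_sq_eq_tsum (x : ℓ²(ι, E)) : (‖x‖₊ : ℝ≥0∞) ^ 2 = ∑' i, (‖x i‖₊ : ℝ≥0∞) ^ 2 := by
  have hsum : Summable fun i => ‖x i‖₊ ^ 2 := by
    simpa [← NNReal.summable_coe] using memℓp_two_iff_summable.1 x.2
  simp_rw [← ENNReal.coe_pow]
  rw [← ENNReal.coe_tsum hsum, ENNReal.coe_inj, ← NNReal.coe_inj]
  push_cast
  exact norm_sq_eq_tsum x

lemma norm_le_of_tsum_nnnorm_sq_le {x : ℓ²(ι, E)} {M : ℝ≥0}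
    (h : ∑' i, (‖x i‖₊ : ℝ≥0∞) ^ 2 ≤ (M : ℝ≥0∞) ^ 2) : ‖x‖ ≤ M := by
  rw [← coe_nnnorm_sq_eq_tsum, ← ENNReal.coe_pow, ← ENNReal.coe_pow, ENNReal.coe_le_coe] at h
  exact NNReal.coe_le_coe.2 ((pow_le_pow_iff_left₀ bot_le bot_le two_ne_zero).1 h)

end L2

section Multiplier

variable {ι : Type*}

lemma tsum_nnnorm_mul_sq_le {m : ι → ℂ} (hm : ∀ i, ‖m i‖ ≤ 1) (x : ℓ²(ι, ℂ)) :
    ∑' i, (‖m i * x i‖₊ : ℝ≥0∞) ^ 2 ≤ (‖x‖₊ : ℝ≥0∞) ^ 2 := by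
  rw [coe_nnnorm_sq_eq_tsum]
  refine ENNReal.tsum_le_tsum fun i => ?_
  gcongr
  rw [nnnorm_mul]
  exact mul_le_of_le_one_left bot_le (hm i)

noncomputable def multiplierL2 {m : ι → ℂ} (hm : ∀ i, ‖m i‖ ≤ 1) (x : ℓ²(ι, ℂ)) : ℓ²(ι, ℂ) :=
  ⟨fun i => m i * x i, memℓp_two_of_tsum_ne_top
    ((tsum_nnnorm_mul_sq_le hm x).trans_lt (ENNReal.pow_lt_top ENNReal.coe_lt_top)).ne⟩

noncomputable def multiplierCLM {m : ι → ℂ} (hm : ∀ i, ‖m i‖ ≤ 1) : ℓ²(ι, ℂ) →L[ℂ] ℓ²(ι, ℂ) :=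
  LinearMap.mkContinuous
    { toFun := multiplierL2 hm
      map_add' x y := lp.ext <| funext fun i => mul_add _ _ _
      map_smul' c x := lp.ext <| funext fun i => mul_left_comm _ _ _ }
    1 fun x => by
      rw [one_mul]
      exact norm_le_of_tsum_nnnorm_sq_le (x := multiplierL2 hm x) (tsum_nnnorm_mul_sq_le hm x)

lemma multiplierCLM_apply {m : ι → ℂ} (hm : ∀ i, ‖m i‖ ≤ 1) (x : ℓ²(ι, ℂ)) (i : ι) :
    multiplierCLM hm x i = m i * x i :=
  rfl

end Multiplier

namespace RBO

variable {s : ℝ}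

noncomputable def sobolevWeight (s : ℝ) (n : ℤ) : ℝ :=
  Real.sqrt (2 * Real.pi * (1 + (n : ℝ) ^ 2) ^ s)

lemma sq_sobolevWeight (s : ℝ) (n : ℤ) :
    sobolevWeight s n ^ 2 = 2 * Real.pi * (1 + (n : ℝ) ^ 2) ^ s :=
  Real.sq_sqrt (by positivity)

lemma sobolevWeight_pos (s : ℝ) (n : ℤ) : 0 < sobolevWeight s n :=
  Real.sqrt_pos.2 (by positivity)

lemma sobolevWeight_le_add (hs : 0 ≤ s) (n m : ℤ) :
    sobolevWeight s n ≤ 2 ^ s * (sobolevWeight s m + sobolevWeight s (n - m)) := by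
  set a := 1 + (m : ℝ) ^ 2
  set b := 1 + ((n - m : ℤ) : ℝ) ^ 2
  have hbase : 1 + (n : ℝ) ^ 2 ≤ 4 * max a b := by
    have : (n : ℝ) ^ 2 ≤ 2 * (m : ℝ) ^ 2 + 2 * ((n - m : ℤ) : ℝ) ^ 2 := by
      push_cast; nlinarith [sq_nonneg ((n : ℝ) - 2 * m)]
    linarith [le_max_left a b, le_max_right a b]
  have hpow : (1 + (n : ℝ) ^ 2) ^ s ≤ (2 ^ s) ^ 2 * (a ^ s + b ^ s) := by
    have hmax : max a b ^ s ≤ a ^ s + b ^ s := by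
      have ha : 0 ≤ a ^ s := by positivity
      have hb : 0 ≤ b ^ s := by positivity
      rcases max_choice a b with h | h <;> rw [h] <;> linarith
    calc (1 + (n : ℝ) ^ 2) ^ s ≤ (4 * max a b) ^ s := Real.rpow_le_rpow (by positivity) hbase hs
      _ = (2 ^ s) ^ 2 * max a b ^ s := by
        rw [Real.mul_rpow (by norm_num) (by positivity), ← Real.rpow_natCast,
          ← Real.rpow_mul (by norm_num), mul_comm s, Real.rpow_mul (by norm_num)]
        norm_num
      _ ≤ _ := by gcongr
  have hm := sobolevWeight_pos s m
  have hk := sobolevWeight_pos s (n - m)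
  refine (pow_le_pow_iff_left₀ (sobolevWeight_pos s n).le (by positivity) two_ne_zero).1 ?_
  calc sobolevWeight s n ^ 2
        ≤ (2 ^ s) ^ 2 * (sobolevWeight s m ^ 2 + sobolevWeight s (n - m) ^ 2) := by
        rw [sq_sobolevWeight, sq_sobolevWeight, sq_sobolevWeight]
        nlinarith [Real.pi_pos]
    _ ≤ (2 ^ s * (sobolevWeight s m + sobolevWeight s (n - m))) ^ 2 := by
        rw [mul_pow]; gcongr; nlinarith

lemma summable_inv_sq_sobolevWeight (hs : 1 / 2 < s) :
    Summable fun n => (sobolevWeight s n ^ 2)⁻¹ := by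
  refine .of_norm_bounded_eventually (Real.summable_abs_int_rpow (b := 2 * s) (by linarith)) ?_
  filter_upwards [(finite_singleton (0 : ℤ)).compl_mem_cofinite] with n hn
  have hn : (n : ℝ) ≠ 0 := Int.cast_ne_zero.2 hn
  rw [Real.norm_of_nonneg (by positivity), Real.rpow_neg (abs_nonneg _), sq_sobolevWeight,
    Real.rpow_mul (abs_nonneg _), Real.rpow_two, sq_abs]
  refine inv_anti₀ (by positivity) ?_
  calc ((n : ℝ) ^ 2) ^ s ≤ (1 + (n : ℝ) ^ 2) ^ s :=
        Real.rpow_le_rpow (by positivity) (by linarith) (by linarith)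
    _ ≤ 2 * Real.pi * (1 + (n : ℝ) ^ 2) ^ s :=
        le_mul_of_one_le_left (by positivity) (by linarith [Real.pi_gt_three])

lemma norm_sobolevWeight_mul_sq (s : ℝ) (a : ℤ → ℂ) (n : ℤ) :
    ‖(sobolevWeight s n : ℂ) * a n‖ ^ 2 = 2 * Real.pi * ((1 + (n : ℝ) ^ 2) ^ s * ‖a n‖ ^ 2) := by
  rw [norm_mul, Complex.norm_real, Real.norm_of_nonneg (sobolevWeight_pos s n).le, mul_pow,
    sq_sobolevWeight, mul_assoc]

lemma inHs_iff_memℓp {a : ℤ → ℂ} :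
    inHs s a ↔ Memℓp (fun n => (sobolevWeight s n : ℂ) * a n) 2 := by
  rw [memℓp_two_iff_summable]
  simp_rw [norm_sobolevWeight_mul_sq]
  exact (summable_mul_left_iff (by positivity)).symm

lemma hNorm_eq_norm {a : ℤ → ℂ} {x : ℓ²(ℤ, ℂ)} (hx : ∀ n, x n = sobolevWeight s n * a n) :
    hNorm s a = ‖x‖ := by
  rw [hNorm, ← Real.sqrt_sq (norm_nonneg x), norm_sq_eq_tsum, ← tsum_mul_left]
  simp_rw [hx, norm_sobolevWeight_mul_sq]

open Classical in
noncomputable def toL2 (s : ℝ) (a : ℤ → ℂ) : ℓ²(ℤ, ℂ) :=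
  if h : Memℓp (fun n => (sobolevWeight s n : ℂ) * a n) 2 then ⟨_, h⟩ else 0

noncomputable def ofL2 (s : ℝ) : ℓ²(ℤ, ℂ) →ₗ[ℂ] ℤ → ℂ where
  toFun x n := x n / sobolevWeight s n
  map_add' x y := funext fun n => by simp [add_div]
  map_smul' c x := funext fun n => by simp [mul_div_assoc]

lemma toL2_apply {a : ℤ → ℂ} (ha : inHs s a) (n : ℤ) :
    toL2 s a n = sobolevWeight s n * a n := by
  rw [toL2, dif_pos (inHs_iff_memℓp.1 ha)]

lemma sobolevWeight_mul_ofL2 (x : ℓ²(ℤ, ℂ)) (n : ℤ) : sobolevWeight s n * ofL2 s x n = x n :=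
  mul_div_cancel₀ _ (Complex.ofReal_ne_zero.2 (sobolevWeight_pos s n).ne')

lemma inHs_ofL2 (x : ℓ²(ℤ, ℂ)) : inHs s (ofL2 s x) := by
  rw [inHs_iff_memℓp]
  simpa only [sobolevWeight_mul_ofL2] using lp.memℓp x

lemma toL2_ofL2 (x : ℓ²(ℤ, ℂ)) : toL2 s (ofL2 s x) = x :=
  lp.ext <| funext fun n => by rw [toL2_apply (inHs_ofL2 x), sobolevWeight_mul_ofL2]

lemma ofL2_toL2 {a : ℤ → ℂ} (ha : inHs s a) : ofL2 s (toL2 s a) = a :=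
  funext fun n => by
    rw [ofL2, LinearMap.coe_mk, AddHom.coe_mk, toL2_apply ha,
      mul_div_cancel_left₀ _ (Complex.ofReal_ne_zero.2 (sobolevWeight_pos s n).ne')]

lemma hNorm_sub_eq_norm_toL2_sub {a b : ℤ → ℂ} (ha : inHs s a) (hb : inHs s b) :
    hNorm s (fun n => a n - b n) = ‖toL2 s a - toL2 s b‖ :=
  hNorm_eq_norm fun n => by
    rw [lp.coeFn_sub, Pi.sub_apply, toL2_apply ha, toL2_apply hb, mul_sub]

lemma coe_nnnorm_sobolevWeight (s : ℝ) (n : ℤ) :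
    (‖(sobolevWeight s n : ℂ)‖₊ : ℝ) = sobolevWeight s n := by
  rw [coe_nnnorm, Complex.norm_real, Real.norm_of_nonneg (sobolevWeight_pos s n).le]

lemma nnnorm_sobolevWeight_ne_zero (s : ℝ) (n : ℤ) : ‖(sobolevWeight s n : ℂ)‖₊ ≠ 0 := by
  rw [← NNReal.coe_ne_zero, coe_nnnorm_sobolevWeight]
  exact (sobolevWeight_pos s n).ne'

lemma summable_inv_sq_nnnorm_sobolevWeight (hs : 1 / 2 < s) :
    Summable fun n => (‖(sobolevWeight s n : ℂ)‖₊ ^ 2)⁻¹ := by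
  rw [← NNReal.summable_coe]
  simpa only [NNReal.coe_inv, NNReal.coe_pow, coe_nnnorm_sobolevWeight] using
    summable_inv_sq_sobolevWeight hs

noncomputable def convConst (s : ℝ) : ℝ≥0 :=
  2 * 2 ^ s * NNReal.sqrt (∑' n, (‖(sobolevWeight s n : ℂ)‖₊ ^ 2)⁻¹)

lemma tsum_sq_sobolevWeight_mul_conv_le (hs : 1 / 2 < s) (x y : ℓ²(ℤ, ℂ)) :
    ∑' n, ((‖(sobolevWeight s n : ℂ)‖₊ : ℝ≥0∞) *
        ∑' m, (‖ofL2 s x m‖₊ : ℝ≥0∞) * ‖ofL2 s y (n - m)‖₊) ^ 2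
      ≤ ((convConst s * ‖x‖₊ * ‖y‖₊ : ℝ≥0) : ℝ≥0∞) ^ 2 := by
  set W := fun n => ‖(sobolevWeight s n : ℂ)‖₊
  set S := ∑' n, (W n ^ 2)⁻¹
  have hW : ∀ n m, W n ≤ 2 ^ s * (W m + W (n - m)) := fun n m => by
    rw [← NNReal.coe_le_coe]
    push_cast
    simpa only [W, coe_nnnorm_sobolevWeight] using sobolevWeight_le_add (by linarith) n m
  have hS : ∑' n, (((W n ^ 2)⁻¹ : ℝ≥0) : ℝ≥0∞) = S :=
    (ENNReal.coe_tsum (summable_inv_sq_nnnorm_sobolevWeight hs)).symm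
  have hnorm : ∀ z : ℓ²(ℤ, ℂ),
      ∑' n, ((W n : ℝ≥0∞) * ‖ofL2 s z n‖₊) ^ 2 = (‖z‖₊ : ℝ≥0∞) ^ 2 := by
    intro z
    rw [coe_nnnorm_sq_eq_tsum]
    simp only [W, ← ENNReal.coe_mul, ← nnnorm_mul, sobolevWeight_mul_ofL2]
  have hl1 : ∀ z : ℓ²(ℤ, ℂ),
      (∑' n, (‖ofL2 s z n‖₊ : ℝ≥0∞)) ^ 2 ≤ S * (‖z‖₊ : ℝ≥0∞) ^ 2 := fun z => by
    simpa only [hS, hnorm] using ENNReal.tsum_sq_le_tsum_inv_sq_mul W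
      (fun n => ‖ofL2 s z n‖₊) (nnnorm_sobolevWeight_ne_zero s)
  calc _ ≤ 2 * ((2 ^ s : ℝ≥0) : ℝ≥0∞) ^ 2 * ((∑' n, (‖ofL2 s y n‖₊ : ℝ≥0∞)) ^ 2 * ‖x‖₊ ^ 2
          + (∑' n, (‖ofL2 s x n‖₊ : ℝ≥0∞)) ^ 2 * ‖y‖₊ ^ 2) := by
        simpa only [hnorm] using ENNReal.tsum_weight_mul_conv_sq_le hW (fun m => ‖ofL2 s x m‖₊)
          (fun m => ‖ofL2 s y m‖₊)
    _ ≤ 2 * ((2 ^ s : ℝ≥0) : ℝ≥0∞) ^ 2 * (S * ‖y‖₊ ^ 2 * ‖x‖₊ ^ 2 + S * ‖x‖₊ ^ 2 * ‖y‖₊ ^ 2) := by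
        gcongr
        · exact hl1 y
        · exact hl1 x
    _ = ((convConst s * ‖x‖₊ * ‖y‖₊ : ℝ≥0) : ℝ≥0∞) ^ 2 := by
        have hC : ((NNReal.sqrt S : ℝ≥0) : ℝ≥0∞) ^ 2 = S := by
          rw [← ENNReal.coe_pow, NNReal.sq_sqrt]
        rw [convConst]
        push_cast
        rw [mul_pow, mul_pow, mul_pow, mul_pow, hC]
        ring

lemma summable_conv_ofL2 (hs : 1 / 2 < s) (x y : ℓ²(ℤ, ℂ)) (n : ℤ) :
    Summable fun m => ofL2 s x m * ofL2 s y (n - m) := by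
  have hfin := ENNReal.ne_top_of_tsum_ne_top
    ((tsum_sq_sobolevWeight_mul_conv_le hs x y).trans_lt
      (ENNReal.pow_lt_top ENNReal.coe_lt_top)).ne n
  replace hfin := (ENNReal.pow_ne_top_iff.1 hfin).resolve_right two_ne_zero
  refine Summable.of_nnnorm ?_
  simp_rw [nnnorm_mul]
  rw [← ENNReal.tsum_coe_ne_top_iff_summable]
  push_cast
  intro h
  rw [h, ENNReal.mul_top (ENNReal.coe_ne_zero.2 (nnnorm_sobolevWeight_ne_zero s n))] at hfin
  exact hfin rfl

lemma tsum_nnnorm_sobolevWeight_mul_fconv_sq_le (hs : 1 / 2 < s) (x y : ℓ²(ℤ, ℂ)) :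
    ∑' n, (‖(sobolevWeight s n : ℂ) * fconv (ofL2 s x) (ofL2 s y) n‖₊ : ℝ≥0∞) ^ 2
      ≤ ((convConst s * ‖x‖₊ * ‖y‖₊ : ℝ≥0) : ℝ≥0∞) ^ 2 := by
  refine le_trans (ENNReal.tsum_le_tsum fun n => ?_) (tsum_sq_sobolevWeight_mul_conv_le hs x y)
  rw [nnnorm_mul, ENNReal.coe_mul]
  gcongr
  simpa only [fconv, enorm_eq_nnnorm, nnnorm_mul, ENNReal.coe_mul] using
    enorm_tsum_le_tsum_enorm (f := fun m => ofL2 s x m * ofL2 s y (n - m))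

noncomputable def convL2 (hs : 1 / 2 < s) (x y : ℓ²(ℤ, ℂ)) : ℓ²(ℤ, ℂ) :=
  ⟨fun n => (sobolevWeight s n : ℂ) * fconv (ofL2 s x) (ofL2 s y) n,
    memℓp_two_of_tsum_ne_top ((tsum_nnnorm_sobolevWeight_mul_fconv_sq_le hs x y).trans_lt
      (ENNReal.pow_lt_top ENNReal.coe_lt_top)).ne⟩

lemma convL2_apply (hs : 1 / 2 < s) (x y : ℓ²(ℤ, ℂ)) (n : ℤ) :
    convL2 hs x y n = sobolevWeight s n * fconv (ofL2 s x) (ofL2 s y) n :=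
  rfl

lemma norm_convL2_le (hs : 1 / 2 < s) (x y : ℓ²(ℤ, ℂ)) :
    ‖convL2 hs x y‖ ≤ convConst s * ‖x‖ * ‖y‖ := by
  simpa only [NNReal.coe_mul, coe_nnnorm] using norm_le_of_tsum_nnnorm_sq_le (x := convL2 hs x y)
    (tsum_nnnorm_sobolevWeight_mul_fconv_sq_le hs x y)

lemma fconv_add_left {a a' b : ℤ → ℂ} {n : ℤ} (ha : Summable fun m => a m * b (n - m))
    (ha' : Summable fun m => a' m * b (n - m)) :
    fconv (a + a') b n = fconv a b n + fconv a' b n := by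
  simp only [fconv, Pi.add_apply, add_mul]
  exact ha.tsum_add ha'

lemma fconv_add_right {a b b' : ℤ → ℂ} {n : ℤ} (hb : Summable fun m => a m * b (n - m))
    (hb' : Summable fun m => a m * b' (n - m)) :
    fconv a (b + b') n = fconv a b n + fconv a b' n := by
  simp only [fconv, Pi.add_apply, mul_add]
  exact hb.tsum_add hb'

lemma fconv_smul_left (c : ℂ) (a b : ℤ → ℂ) (n : ℤ) : fconv (c • a) b n = c * fconv a b n := by
  simp only [fconv, Pi.smul_apply, smul_eq_mul, mul_assoc, tsum_mul_left]

lemma fconv_smul_right (c : ℂ) (a b : ℤ → ℂ) (n : ℤ) : fconv a (c • b) n = c * fconv a b n := by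
  simp only [fconv, Pi.smul_apply, smul_eq_mul, mul_left_comm _ c, tsum_mul_left]

noncomputable def convCLM (hs : 1 / 2 < s) : ℓ²(ℤ, ℂ) →L[ℂ] ℓ²(ℤ, ℂ) →L[ℂ] ℓ²(ℤ, ℂ) :=
  (LinearMap.mk₂ ℂ (convL2 hs)
    (fun x x' y => lp.ext <| funext fun n => by
      rw [lp.coeFn_add, Pi.add_apply, convL2_apply, convL2_apply, convL2_apply, map_add,
        fconv_add_left (summable_conv_ofL2 hs x y n) (summable_conv_ofL2 hs x' y n), mul_add])
    (fun c x y => lp.ext <| funext fun n => by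
      rw [lp.coeFn_smul, Pi.smul_apply, convL2_apply, convL2_apply, map_smul, fconv_smul_left,
        smul_eq_mul, mul_left_comm])
    (fun x y y' => lp.ext <| funext fun n => by
      rw [lp.coeFn_add, Pi.add_apply, convL2_apply, convL2_apply, convL2_apply, map_add,
        fconv_add_right (summable_conv_ofL2 hs x y n) (summable_conv_ofL2 hs x y' n), mul_add])
    (fun c x y => lp.ext <| funext fun n => by
      rw [lp.coeFn_smul, Pi.smul_apply, convL2_apply, convL2_apply, map_smul, fconv_smul_right,
        smul_eq_mul, mul_left_comm])).mkContinuous₂ (convConst s) (norm_convL2_le hs)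

lemma convCLM_apply (hs : 1 / 2 < s) (x y : ℓ²(ℤ, ℂ)) (n : ℤ) :
    convCLM hs x y n = sobolevWeight s n * fconv (ofL2 s x) (ofL2 s y) n :=
  rfl

lemma norm_Kmul_le (n : ℤ) : ‖Kmul n‖ ≤ 1 := by
  have h : ((1 + |n| : ℤ) : ℂ) = 1 + |n| := by push_cast; rfl
  have hpos : (0 : ℤ) < 1 + |n| := by positivity
  rw [Kmul, norm_div, ← h, Complex.norm_intCast, norm_mul, norm_neg, Complex.norm_I, one_mul,
    Complex.norm_intCast, div_le_one (by positivity)]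
  exact_mod_cast (show |n| ≤ |(1 + |n|)| by rw [abs_of_pos hpos]; linarith)

noncomputable def rboField (hs : 1 / 2 < s) (x : ℓ²(ℤ, ℂ)) : ℓ²(ℤ, ℂ) :=
  multiplierCLM norm_Kmul_le (x + (1 / 2 : ℂ) • convCLM hs x x)

lemma contDiff_rboField (hs : 1 / 2 < s) : ContDiff ℝ 1 (rboField hs) := by
  refine ContDiff.restrict_scalars ℝ (𝕜' := ℂ) ?_
  unfold rboField
  fun_prop

lemma rboField_apply (hs : 1 / 2 < s) (x : ℓ²(ℤ, ℂ)) (n : ℤ) :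
    rboField hs x n = sobolevWeight s n *
      (Kmul n * (ofL2 s x n + 1 / 2 * fconv (ofL2 s x) (ofL2 s x) n)) := by
  rw [rboField, multiplierCLM_apply, lp.coeFn_add, Pi.add_apply, lp.coeFn_smul, Pi.smul_apply,
    convCLM_apply, ← sobolevWeight_mul_ofL2 x n, smul_eq_mul]
  ring

lemma toL2_eq_add_integral_iff (hs : 1 / 2 < s) {u₀ : ℤ → ℂ} {u : ℝ → ℤ → ℂ} {t : ℝ}
    (h₀ : inHs s u₀) (hu : ∀ τ ∈ uIcc 0 t, inHs s (u τ))
    (hint : IntervalIntegrable (fun τ => rboField hs (toL2 s (u τ))) volume 0 t) :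
    toL2 s (u t) = toL2 s u₀ + ∫ τ in (0:ℝ)..t, rboField hs (toL2 s (u τ)) ↔
      ∀ n, u t n = u₀ n + ∫ τ in (0:ℝ)..t, Kmul n * (u τ n + 1 / 2 * fconv (u τ) (u τ) n) := by
  have hcoord : ∀ n, (∫ τ in (0:ℝ)..t, rboField hs (toL2 s (u τ))) n = sobolevWeight s n *
      ∫ τ in (0:ℝ)..t, Kmul n * (u τ n + 1 / 2 * fconv (u τ) (u τ) n) := fun n => by
    rw [← intervalIntegral.integral_const_mul]
    refine ((lp.evalCLM ℝ (fun _ : ℤ => ℂ) 2 n).intervalIntegral_comp_comm hint).symm.trans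
      (intervalIntegral.integral_congr fun τ hτ => ?_)
    change rboField hs (toL2 s (u τ)) n = _
    rw [rboField_apply, ofL2_toL2 (hu τ hτ)]
  have key : ∀ n, toL2 s (u t) n = (toL2 s u₀ + ∫ τ in (0:ℝ)..t, rboField hs (toL2 s (u τ))) n ↔
      u t n = u₀ n + ∫ τ in (0:ℝ)..t, Kmul n * (u τ n + 1 / 2 * fconv (u τ) (u τ) n) := fun n => by
    rw [lp.coeFn_add, Pi.add_apply, hcoord, toL2_apply (hu t right_mem_uIcc), toL2_apply h₀,
      ← mul_add]
    exact mul_right_inj' (Complex.ofReal_ne_zero.2 (sobolevWeight_pos s n).ne')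
  exact ⟨fun h n => (key n).1 (congrFun (congrArg (⇑) h) n),
    fun h => lp.ext (funext fun n => (key n).2 (h n))⟩

lemma continuousOn_toL2_iff {T : ℝ} {u : ℝ → ℤ → ℂ} (hu : ∀ t ∈ Icc (-T) T, inHs s (u t)) :
    ContinuousOn (fun t => toL2 s (u t)) (Icc (-T) T) ↔ ∀ t₀ ∈ Icc (-T) T,
      Tendsto (fun t => hNorm s fun k => u t k - u t₀ k) (𝓝[Icc (-T) T] t₀) (𝓝 0) := by
  refine forall₂_congr fun t₀ ht₀ => ?_
  rw [ContinuousWithinAt, tendsto_iff_norm_sub_tendsto_zero]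
  exact tendsto_congr' (eventually_nhdsWithin_of_forall fun t ht =>
    (hNorm_sub_eq_norm_toL2_sub (hu t ht) (hu t₀ ht₀)).symm)

theorem _root_.IsSol.isIntegralSolution (hs : 1 / 2 < s) {T : ℝ} {u₀ : ℤ → ℂ}
    {u : ℝ → ℤ → ℂ} (h₀ : inHs s u₀) (hu : IsSol s T u₀ u) :
    IsIntegralSolution (rboField hs) T (toL2 s u₀) fun t => toL2 s (u t) := by
  obtain ⟨hmem, hcont, heq⟩ := hu
  have hc := (continuousOn_toL2_iff hmem).2 hcont
  refine ⟨hc, fun t ht => ?_⟩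
  have hsub : uIcc 0 t ⊆ Icc (-T) T :=
    uIcc_subset_Icc ⟨by linarith [ht.1, ht.2], by linarith [ht.1, ht.2]⟩ ht
  exact (toL2_eq_add_integral_iff hs h₀ (fun τ hτ => hmem τ (hsub hτ))
    ((contDiff_rboField hs).continuous.comp_continuousOn (hc.mono hsub)).intervalIntegrable).2
    (heq t ht)

theorem _root_.IsIntegralSolution.isSol (hs : 1 / 2 < s) {T : ℝ} {u₀ : ℤ → ℂ}
    {α : ℝ → ℓ²(ℤ, ℂ)} (h₀ : inHs s u₀) (hα : IsIntegralSolution (rboField hs) T (toL2 s u₀) α) :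
    IsSol s T u₀ fun t => ofL2 s (α t) := by
  have hmem : ∀ t, inHs s (ofL2 s (α t)) := fun t => inHs_ofL2 (α t)
  refine ⟨fun t _ => hmem t, (continuousOn_toL2_iff fun t _ => hmem t).1 ?_, fun t ht => ?_⟩
  · simpa only [toL2_ofL2] using hα.1
  have hsub : uIcc 0 t ⊆ Icc (-T) T :=
    uIcc_subset_Icc ⟨by linarith [ht.1, ht.2], by linarith [ht.1, ht.2]⟩ ht
  refine (toL2_eq_add_integral_iff hs h₀ (fun τ _ => hmem τ) ?_).1 ?_
  · simp only [toL2_ofL2]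
    exact ((contDiff_rboField hs).continuous.comp_continuousOn (hα.1.mono hsub)).intervalIntegrable
  · simpa only [toL2_ofL2] using hα.2 t ht

end RBO

/-- **Local well-posedness of the periodic rBO equation for s > 1/2**:
for every `u₀ ∈ H^s_per` there exist `T > 0` and a unique solution
`u ∈ C([-T,T]; H^s_per)` of the initial value problem. -/
theorem rBO_local_wellposedness (s : ℝ) (hs : 1 / 2 < s)
    (u₀ : ℤ → ℂ) (h₀ : inHs s u₀) :
    ∃ T > (0:ℝ), (∃ u : ℝ → ℤ → ℂ, IsSol s T u₀ u) ∧
      ∀ u v : ℝ → ℤ → ℂ, IsSol s T u₀ u → IsSol s T u₀ v →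
        ∀ t ∈ Set.Icc (-T) T, u t = v t := by
  have hF := RBO.contDiff_rboField hs
  obtain ⟨T, hT, α, hα⟩ := exists_isIntegralSolution hF (RBO.toL2 s u₀)
  refine ⟨T, hT, ⟨_, hα.isSol hs h₀⟩, fun u v hu hv t ht => ?_⟩
  have h := (hu.isIntegralSolution hs h₀).eqOn hF hT (hv.isIntegralSolution hs h₀) ht
  rw [← RBO.ofL2_toL2 (hu.1 t ht), ← RBO.ofL2_toL2 (hv.1 t ht)]
  exact congrArg _ h
end

section
/- The constants a, b, d in the cnoidal-wave ansatz φ_c(x) = a + b[dn²(dx;k) - E/K] solving c φ_c'' - (c-1)φ_c + (1/2)φ_c² = 0 with period L are determined by: d = 2K/L, b = 48cK²/L², aL² = -48cKE + 16K²c(2-k²) - cL² + L² (equivalently a is determined by the second system equation), and c must satisfy the quadratic [256K⁴(1-k²+k⁴) - L⁴]c² + 2cL⁴ - L⁴ = 0, whose roots are c = L²/(L² ± 16K²√(1-k²+k⁴)). -/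
/-!
The first equation is `b (b/2 - 6 c d²) = 0` and the second is linear in `a` with coefficient `b`,
so `b ≠ 0` determines `b = 12 c d²` and then `a`. Substituting both into the third equation, the
terms in `E/K` cancel and what remains is `16 d⁴ c² (1 - k² + k⁴) = (c - 1)²`; with `d = 2K/L` this
is the quadratic for `c`. Writing `256 K⁴ (1 - k² + k⁴) = B²` and `L⁴ = A²`, the quadratic is
`-((A + B) c - A) ((A - B) c - A)`, which gives its two roots.
-/

section CnoidalSystem

variable {a b c d k r : ℝ}

theorem cnoidal_amplitude_eq (hb : b ≠ 0) (e1 : b ^ 2 / 2 - 6 * c * b * d ^ 2 = 0) :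
    b = 12 * c * d ^ 2 := by
  have h : b * (b - 12 * c * d ^ 2) = 0 := by linear_combination 2 * e1
  exact sub_eq_zero.mp ((mul_eq_zero.mp h).resolve_left hb)

theorem cnoidal_offset_eq (hb : b ≠ 0)
    (e2 : 4 * b * d ^ 2 * c * (1 + (1 - k ^ 2)) + a * b - b ^ 2 * r - (c - 1) * b = 0) :
    a = b * r + (c - 1) - 4 * d ^ 2 * c * (2 - k ^ 2) := by
  have h : b * (a - (b * r + (c - 1) - 4 * d ^ 2 * c * (2 - k ^ 2))) = 0 := by
    linear_combination e2
  exact sub_eq_zero.mp ((mul_eq_zero.mp h).resolve_left hb)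

theorem cnoidal_speed_relation (hb : b = 12 * c * d ^ 2)
    (ha : a = b * r + (c - 1) - 4 * d ^ 2 * c * (2 - k ^ 2))
    (e3 : a ^ 2 / 2 - a * b * r + b ^ 2 / 2 * r ^ 2 - (c - 1) * a
          + (c - 1) * b * r - 2 * c * b * d ^ 2 * (1 - k ^ 2) = 0) :
    16 * d ^ 4 * c ^ 2 * (1 - k ^ 2 + k ^ 4) = (c - 1) ^ 2 := by
  subst ha hb
  linear_combination 2 * e3

end CnoidalSystem

theorem quadratic_eq_zero_iff_eq_div_add_or_eq_div_sub {F : Type*} [Field F] {A B x : F}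
    (h : B ^ 2 - A ^ 2 ≠ 0) :
    (B ^ 2 - A ^ 2) * x ^ 2 + 2 * x * A ^ 2 - A ^ 2 = 0 ↔ x = A / (A + B) ∨ x = A / (A - B) := by
  have hfac : B ^ 2 - A ^ 2 = -((A + B) * (A - B)) := by ring
  have hp : A + B ≠ 0 := fun h0 => h (by rw [hfac, h0]; ring)
  have hm : A - B ≠ 0 := fun h0 => h (by rw [hfac, h0]; ring)
  have hroots : (B ^ 2 - A ^ 2) * x ^ 2 + 2 * x * A ^ 2 - A ^ 2
      = -((x * (A + B) - A) * (x * (A - B) - A)) := by ring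
  rw [hroots, neg_eq_zero, mul_eq_zero, sub_eq_zero, sub_eq_zero, eq_div_iff hp, eq_div_iff hm]

theorem sq_mul_one_sub_sq_add_pow_four_eq_sq_sqrt (K k : ℝ) :
    256 * K ^ 4 * (1 - k ^ 2 + k ^ 4) = (16 * K ^ 2 * √(1 - k ^ 2 + k ^ 4)) ^ 2 := by
  have hq : 0 ≤ 1 - k ^ 2 + k ^ 4 := by nlinarith [sq_nonneg (k ^ 2 - 1 / 2)]
  rw [mul_pow, Real.sq_sqrt hq]
  ring

theorem cnoidal_constants_general (L c a b d k K E : ℝ)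
    (hL : 0 < L) (hK : 0 < K) (hb : b ≠ 0)
    (hd : d = 2 * K / L)
    (e1 : b ^ 2 / 2 - 6 * c * b * d ^ 2 = 0)
    (e2 : 4 * b * d ^ 2 * c * (1 + (1 - k ^ 2)) + a * b - b ^ 2 * (E / K) - (c - 1) * b = 0)
    (e3 : a ^ 2 / 2 - a * b * (E / K) + b ^ 2 / 2 * (E / K) ^ 2 - (c - 1) * a
          + (c - 1) * b * (E / K) - 2 * c * b * d ^ 2 * (1 - k ^ 2) = 0) :
    b = 48 * c * K ^ 2 / L ^ 2 ∧
    a * L ^ 2 = 48 * c * K * E - 16 * K ^ 2 * c * (2 - k ^ 2) + c * L ^ 2 - L ^ 2 ∧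
    (256 * K ^ 4 * (1 - k ^ 2 + k ^ 4) - L ^ 4) * c ^ 2 + 2 * c * L ^ 4 - L ^ 4 = 0 ∧
    (256 * K ^ 4 * (1 - k ^ 2 + k ^ 4) - L ^ 4 ≠ 0 →
      ∀ c' : ℝ,
        (256 * K ^ 4 * (1 - k ^ 2 + k ^ 4) - L ^ 4) * c' ^ 2 + 2 * c' * L ^ 4 - L ^ 4 = 0 ↔
          (c' = L ^ 2 / (L ^ 2 + 16 * K ^ 2 * Real.sqrt (1 - k ^ 2 + k ^ 4)) ∨
           c' = L ^ 2 / (L ^ 2 - 16 * K ^ 2 * Real.sqrt (1 - k ^ 2 + k ^ 4)))) := by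
  have hL0 : L ≠ 0 := hL.ne'
  have hK0 : K ≠ 0 := hK.ne'
  have hb' := cnoidal_amplitude_eq hb e1
  have ha := cnoidal_offset_eq hb e2
  have hc := cnoidal_speed_relation hb' ha e3
  subst hd
  refine ⟨by rw [hb']; field_simp; ring, by rw [ha, hb']; field_simp; ring, ?_, ?_⟩
  · field_simp at hc
    linear_combination hc
  · intro hD c'
    rw [sq_mul_one_sub_sq_add_pow_four_eq_sq_sqrt, show L ^ 4 = (L ^ 2) ^ 2 by ring] at hD ⊢
    exact quadratic_eq_zero_iff_eq_div_add_or_eq_div_sub hD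

theorem cnoidal_constants (L c a b d k K E : ℝ)
    (hL : 0 < L) (hk : 0 < k) (hk1 : k < 1) (hK : 0 < K) (hb : b ≠ 0)
    (hd : d = 2 * K / L)
    (e1 : b ^ 2 / 2 - 6 * c * b * d ^ 2 = 0)
    (e2 : 4 * b * d ^ 2 * c * (1 + (1 - k ^ 2)) + a * b - b ^ 2 * (E / K) - (c - 1) * b = 0)
    (e3 : a ^ 2 / 2 - a * b * (E / K) + b ^ 2 / 2 * (E / K) ^ 2 - (c - 1) * a
          + (c - 1) * b * (E / K) - 2 * c * b * d ^ 2 * (1 - k ^ 2) = 0) :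
    b = 48 * c * K ^ 2 / L ^ 2 ∧
    a * L ^ 2 = 48 * c * K * E - 16 * K ^ 2 * c * (2 - k ^ 2) + c * L ^ 2 - L ^ 2 ∧
    (256 * K ^ 4 * (1 - k ^ 2 + k ^ 4) - L ^ 4) * c ^ 2 + 2 * c * L ^ 4 - L ^ 4 = 0 ∧
    (256 * K ^ 4 * (1 - k ^ 2 + k ^ 4) - L ^ 4 ≠ 0 →
      ∀ c' : ℝ,
        (256 * K ^ 4 * (1 - k ^ 2 + k ^ 4) - L ^ 4) * c' ^ 2 + 2 * c' * L ^ 4 - L ^ 4 = 0 ↔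
          (c' = L ^ 2 / (L ^ 2 + 16 * K ^ 2 * Real.sqrt (1 - k ^ 2 + k ^ 4)) ∨
           c' = L ^ 2 / (L ^ 2 - 16 * K ^ 2 * Real.sqrt (1 - k ^ 2 + k ^ 4)))) :=
  cnoidal_constants_general L c a b d k K E hL hK hb hd e1 e2 e3
end
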